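/- arXiv:1807.07183 — 3 statements merged into one kernel-verified Lean document; each statement's English description precedes it below -/
import Mathlib

section
/- Let 𝕂 be ℝ or ℂ and let V be a finite-dimensional normed vector space over 𝕂. Let (Wₙ)ₙ be a sequence of linear subspaces of V and W a linear subspace such that every vector w ∈ W is the limit of some sequence (wₙ)ₙ with wₙ ∈ Wₙ for all n. Let (Φₙ)ₙ and (Ψₙ)ₙ be sequences of continuous linear forms on V converging (in operator norm) to linear forms Φ and Ψ respectively, and suppose there exists v ∈ W with Ψ(v) ≠ 0. If for each n there exists aₙ ∈ 𝕂 such that Φₙ(w) = aₙ · Ψₙ(w) for all w ∈ Wₙ, then the sequence (aₙ)ₙ converges to a := Φ(v)/Ψ(v), and Φ(w) = a · Ψ(w) for all w ∈ W. -/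
/-!
STATEMENT 0: Let 𝕂 be ℝ or ℂ and V a finite-dimensional normed vector space over 𝕂.
If (Wₙ) is a sequence of subspaces converging to W (in the sense that every w ∈ W is a
limit of vectors wₙ ∈ Wₙ), (Φₙ) and (Ψₙ) are sequences of continuous linear forms
converging to Φ and Ψ, there is v ∈ W with Ψ(v) ≠ 0, and Φₙ|_{Wₙ} = aₙ · Ψₙ|_{Wₙ},
then aₙ → a := Φ(v)/Ψ(v) and Φ|_W = a · Ψ|_W.
-/

private lemma eval_tendsto_aux
    {𝕂 : Type*} [RCLike 𝕂]
    {V : Type*} [NormedAddCommGroup V] [NormedSpace 𝕂 V]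
    {fn : ℕ → (V →L[𝕂] 𝕂)} {f : V →L[𝕂] 𝕂}
    (hf : Filter.Tendsto fn Filter.atTop (nhds f))
    {xs : ℕ → V} {x : V} (hx : Filter.Tendsto xs Filter.atTop (nhds x)) :
    Filter.Tendsto (fun n => fn n (xs n)) Filter.atTop (nhds (f x)) := by
  have h := (isBoundedBilinearMap_apply.continuous.tendsto ((f, x) : (V →L[𝕂] 𝕂) × V)).comp
    (hf.prodMk_nhds hx)
  exact h

theorem converging_subspaces_and_linear_forms
    (𝕂 : Type*) [RCLike 𝕂]
    (V : Type*) [NormedAddCommGroup V] [NormedSpace 𝕂 V] [FiniteDimensional 𝕂 V]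
    (W : ℕ → Submodule 𝕂 V) (Wlim : Submodule 𝕂 V)
    (happrox : ∀ w ∈ Wlim, ∃ ws : ℕ → V,
      (∀ n, ws n ∈ W n) ∧ Filter.Tendsto ws Filter.atTop (nhds w))
    (Φn Ψn : ℕ → (V →L[𝕂] 𝕂)) (Φ Ψ : V →L[𝕂] 𝕂)
    (hΦ : Filter.Tendsto Φn Filter.atTop (nhds Φ))
    (hΨ : Filter.Tendsto Ψn Filter.atTop (nhds Ψ))
    (v : V) (hv : v ∈ Wlim) (hΨv : Ψ v ≠ 0)
    (a : ℕ → 𝕂) (ha : ∀ n, ∀ w ∈ W n, Φn n w = a n * Ψn n w) :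
    Filter.Tendsto a Filter.atTop (nhds (Φ v / Ψ v)) ∧
      ∀ w ∈ Wlim, Φ w = (Φ v / Ψ v) * Ψ w := by
  obtain ⟨vs, hvs, hvslim⟩ := happrox v hv
  have hΦv : Filter.Tendsto (fun n => Φn n (vs n)) Filter.atTop (nhds (Φ v)) :=
    eval_tendsto_aux hΦ hvslim
  have hΨvlim : Filter.Tendsto (fun n => Ψn n (vs n)) Filter.atTop (nhds (Ψ v)) :=
    eval_tendsto_aux hΨ hvslim
  -- eventually Ψn n (vs n) ≠ 0
  have hne : ∀ᶠ n in Filter.atTop, Ψn n (vs n) ≠ 0 :=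
    hΨvlim (isOpen_ne.mem_nhds hΨv)
  have hquot : Filter.Tendsto (fun n => Φn n (vs n) / Ψn n (vs n)) Filter.atTop
      (nhds (Φ v / Ψ v)) := hΦv.div hΨvlim hΨv
  have heq : ∀ᶠ n in Filter.atTop, Φn n (vs n) / Ψn n (vs n) = a n := by
    filter_upwards [hne] with n hn
    rw [ha n (vs n) (hvs n)]
    field_simp
  have hat : Filter.Tendsto a Filter.atTop (nhds (Φ v / Ψ v)) :=
    hquot.congr' heq
  refine ⟨hat, fun w hw => ?_⟩
  obtain ⟨ws, hws, hwslim⟩ := happrox w hw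
  have h1 : Filter.Tendsto (fun n => Φn n (ws n)) Filter.atTop (nhds (Φ w)) :=
    eval_tendsto_aux hΦ hwslim
  have h2 : Filter.Tendsto (fun n => a n * Ψn n (ws n)) Filter.atTop
      (nhds ((Φ v / Ψ v) * Ψ w)) := hat.mul (eval_tendsto_aux hΨ hwslim)
  have h3 : Filter.Tendsto (fun n => Φn n (ws n)) Filter.atTop
      (nhds ((Φ v / Ψ v) * Ψ w)) := by
    refine h2.congr fun n => ?_
    exact (ha n (ws n) (hws n)).symm
  exact tendsto_nhds_unique h1 h3
end

section
/- Let f, g : ℝ → ℝ be real analytic at 0 with f(0) = g(0) = 0, f(t) ≥ 0 and g(t) ≥ 0 for all t in some interval [0, ε) with ε > 0, and suppose neither f nor g is identically zero on any neighborhood of 0. If a : (0, ε) → ℝ is a function satisfying f'(t) = a(t) · g'(t) for all t ∈ (0, ε), then there exists δ > 0 such that a(t) > 0 for all t ∈ (0, δ). -/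
/-!
Both `f'` and `g'` are positive on some interval `(0, δ)`, so `a = f' / g'` is positive there.
For an analytic `f ≥ 0` with `f 0 = 0` that does not vanish identically, the isolated zeros
principle, applied to `f` and to `f'`, gives `f > 0` on some `(0, δ)` and either `f' ≡ 0` or
`f' ≠ 0` there. By Darboux's theorem `f'` then has constant sign, and `f' ≤ 0` is impossible
because `f` would stay below `f 0 = 0`.
-/

open Filter Topology Set

section RightNeighbourhood

variable {f : ℝ → ℝ} {x : ℝ}

theorem eventually_le_nhdsGT_of_deriv_nonpos (hd : ∀ᶠ t in 𝓝 x, DifferentiableAt ℝ f t)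
    (hf' : ∀ᶠ t in 𝓝[>] x, deriv f t ≤ 0) : ∀ᶠ t in 𝓝[>] x, f t ≤ f x := by
  obtain ⟨u, hxu, hu⟩ := mem_nhdsGT_iff_exists_Ioo_subset.1
    ((hd.filter_mono nhdsWithin_le_nhds).and hf')
  have hanti : AntitoneOn f (Ico x u) := by
    refine antitoneOn_of_deriv_nonpos (convex_Ico x u) (fun t ht => ?_) ?_ ?_
    · rcases ht.1.eq_or_lt with rfl | hxt
      · exact hd.self_of_nhds.continuousAt.continuousWithinAt
      · exact (hu ⟨hxt, ht.2⟩).1.continuousAt.continuousWithinAt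
    · rw [interior_Ico]
      exact fun t ht => (hu ht).1.differentiableWithinAt
    · rw [interior_Ico]
      exact fun t ht => (hu ht).2
  filter_upwards [Ioo_mem_nhdsGT hxu] with t ht
  exact hanti (left_mem_Ico.2 hxu) (Ioo_subset_Ico_self ht) ht.1.le

theorem eventually_deriv_neg_or_pos_nhdsGT (hd : ∀ᶠ t in 𝓝 x, DifferentiableAt ℝ f t)
    (hf' : ∀ᶠ t in 𝓝[>] x, deriv f t ≠ 0) :
    (∀ᶠ t in 𝓝[>] x, deriv f t < 0) ∨ ∀ᶠ t in 𝓝[>] x, 0 < deriv f t := by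
  obtain ⟨u, hxu, hu⟩ := mem_nhdsGT_iff_exists_Ioo_subset.1
    ((hd.filter_mono nhdsWithin_le_nhds).and hf')
  have hmem : Ioo x u ∈ 𝓝[>] x := Ioo_mem_nhdsGT hxu
  refine (hasDerivWithinAt_forall_lt_or_forall_gt_of_forall_ne (convex_Ioo x u)
    (fun t ht => (hu ht).1.hasDerivAt.hasDerivWithinAt) fun t ht => (hu ht).2).imp ?_ ?_ <;>
    exact fun h => mem_of_superset hmem h

theorem AnalyticAt.eventually_lt_nhdsGT (hf : AnalyticAt ℝ f x)
    (hle : ∀ᶠ t in 𝓝[>] x, f x ≤ f t) (hconst : ¬ ∀ᶠ t in 𝓝 x, f t = f x) :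
    ∀ᶠ t in 𝓝[>] x, f x < f t := by
  rcases (hf.sub analyticAt_const).eventually_eq_zero_or_eventually_ne_zero with h | h
  · exact absurd (h.mono fun t ht => sub_eq_zero.1 ht) hconst
  · filter_upwards [hle, nhdsGT_le_nhdsNE x h] with t hlet hne
    exact hlet.lt_of_ne (Ne.symm (sub_ne_zero.1 hne))

theorem AnalyticAt.eventually_deriv_pos_nhdsGT (hf : AnalyticAt ℝ f x)
    (hle : ∀ᶠ t in 𝓝[>] x, f x ≤ f t) (hconst : ¬ ∀ᶠ t in 𝓝 x, f t = f x) :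
    ∀ᶠ t in 𝓝[>] x, 0 < deriv f t := by
  have hd : ∀ᶠ t in 𝓝 x, DifferentiableAt ℝ f t :=
    hf.eventually_analyticAt.mono fun t ht => ht.differentiableAt
  have hlt := hf.eventually_lt_nhdsGT hle hconst
  have not_nonpos : ¬ ∀ᶠ t in 𝓝[>] x, deriv f t ≤ 0 := fun h => by
    obtain ⟨t, hlet, hltt⟩ := ((eventually_le_nhdsGT_of_deriv_nonpos hd h).and hlt).exists
    exact hlet.not_gt hltt
  rcases hf.deriv.eventually_eq_zero_or_eventually_ne_zero with h | h
  · exact absurd ((h.filter_mono nhdsWithin_le_nhds).mono fun t ht => ht.le) not_nonpos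
  · exact (eventually_deriv_neg_or_pos_nhdsGT hd (nhdsGT_le_nhdsNE x h)).resolve_left
      fun hneg => not_nonpos (hneg.mono fun t ht => ht.le)

end RightNeighbourhood

theorem coefficient_positive_near_zero
    (f g : ℝ → ℝ) (hf : AnalyticAt ℝ f 0) (hg : AnalyticAt ℝ g 0)
    (hf0 : f 0 = 0) (hg0 : g 0 = 0)
    (ε : ℝ) (hε : 0 < ε)
    (hfnn : ∀ t ∈ Set.Ico (0 : ℝ) ε, 0 ≤ f t)
    (hgnn : ∀ t ∈ Set.Ico (0 : ℝ) ε, 0 ≤ g t)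
    (hfnz : ¬ ∀ᶠ t in nhds (0 : ℝ), f t = 0)
    (hgnz : ¬ ∀ᶠ t in nhds (0 : ℝ), g t = 0)
    (a : ℝ → ℝ) (ha : ∀ t ∈ Set.Ioo (0 : ℝ) ε, deriv f t = a t * deriv g t) :
    ∃ δ > 0, ∀ t ∈ Set.Ioo (0 : ℝ) δ, 0 < a t := by
  have hIoo : Ioo 0 ε ∈ 𝓝[>] (0 : ℝ) := Ioo_mem_nhdsGT hε
  have hf' : ∀ᶠ t in 𝓝[>] 0, 0 < deriv f t := by
    refine hf.eventually_deriv_pos_nhdsGT ?_ (by rwa [hf0])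
    filter_upwards [hIoo] with t ht
    rw [hf0]
    exact hfnn t (Ioo_subset_Ico_self ht)
  have hg' : ∀ᶠ t in 𝓝[>] 0, 0 < deriv g t := by
    refine hg.eventually_deriv_pos_nhdsGT ?_ (by rwa [hg0])
    filter_upwards [hIoo] with t ht
    rw [hg0]
    exact hgnn t (Ioo_subset_Ico_self ht)
  have hapos : ∀ᶠ t in 𝓝[>] 0, 0 < a t := by
    filter_upwards [hf', hg', hIoo] with t hft hgt ht
    exact pos_of_mul_pos_left (ha t ht ▸ hft) hgt.le
  exact mem_nhdsGT_iff_exists_Ioo_subset.1 hapos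
end

section
/- Let V be a vector space over ℂ and let φ, ψ : V → ℂ be two ℂ-linear forms. Then the three ℝ-linear forms Re ∘ φ, Im ∘ φ, Re ∘ ψ : V → ℝ are linearly independent over ℝ if and only if φ and ψ are linearly independent over ℂ. -/
/-!
Taking real parts, `l ↦ Re ∘ l`, is an `ℝ`-linear isomorphism from `ℂ`-linear to `ℝ`-linear forms
(inverse `Module.Dual.extendRCLikeₗ`), and `Im ∘ φ = Re ∘ (-i φ)`. So the claim is that `φ, -i φ, ψ`
are `ℝ`-independent iff `φ, ψ` are `ℂ`-independent, which holds because `1` and `-i` span `ℂ`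
over `ℝ`.
-/

namespace Complex

theorem exists_ofReal_add_ofReal_mul_eq {c : ℂ} (hc : c.im ≠ 0) (a : ℂ) :
    ∃ r s : ℝ, (r : ℂ) + s * c = a :=
  ⟨a.re - a.im / c.im * c.re, a.im / c.im, by apply Complex.ext <;> simp; field_simp⟩

variable {W : Type*} [AddCommGroup W] [Module ℂ W] [Module ℝ W] [IsScalarTower ℝ ℂ W]

theorem linearIndependent_real_triple_iff_complex_pair {c : ℂ} (hc : c.im ≠ 0) {x y : W} :
    LinearIndependent ℝ ![x, c • x, y] ↔ LinearIndependent ℂ ![x, y] := by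
  constructor
  · intro h
    have hx : x ≠ 0 := h.ne_zero 0
    rw [LinearIndependent.pair_iff' hx]
    intro a hax
    obtain ⟨r, s, rfl⟩ := exists_ofReal_add_ofReal_mul_eq hc a
    have hsum : ∑ i, ![r, s, -1] i • ![x, c • x, y] i = 0 := by
      simp only [Fin.sum_univ_three, Matrix.cons_val_zero, Matrix.cons_val_one, Matrix.cons_val,
        ← hax]
      module
    simpa using Fintype.linearIndependent_iff.mp h _ hsum 2
  · intro h
    rw [Fintype.linearIndependent_iff]
    intro g hg
    have hpair : ((g 0 : ℂ) + g 1 * c) • x + (g 2 : ℂ) • y = 0 := by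
      simp only [Fin.sum_univ_three, Matrix.cons_val_zero, Matrix.cons_val_one, Matrix.cons_val]
        at hg
      linear_combination (norm := module) hg
    obtain ⟨hs, ht⟩ := LinearIndependent.pair_iff.mp h _ _ hpair
    have h1 : g 1 = 0 := by simpa [hc] using congrArg im hs
    have h0 : g 0 = 0 := by simpa [h1] using congrArg re hs
    have h2 : g 2 = 0 := by exact_mod_cast ht
    intro i
    fin_cases i <;> assumption

end Complex

theorem re_im_re_linearIndependent_iff
    (V : Type*) [AddCommGroup V] [Module ℂ V] [Module ℝ V] [IsScalarTower ℝ ℂ V]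
    (φ ψ : V →ₗ[ℂ] ℂ) :
    LinearIndependent ℝ
      ![Complex.reLm.comp (φ.restrictScalars ℝ),
        Complex.imLm.comp (φ.restrictScalars ℝ),
        Complex.reLm.comp (ψ.restrictScalars ℝ)] ↔
      LinearIndependent ℂ ![φ, ψ] := by
  let e := (Module.Dual.extendRCLikeₗ (𝕜 := ℂ) (F := V)).symm
  have hfamily : ![Complex.reLm.comp (φ.restrictScalars ℝ),
        Complex.imLm.comp (φ.restrictScalars ℝ),
        Complex.reLm.comp (ψ.restrictScalars ℝ)] = e.toLinearMap ∘ ![φ, -Complex.I • φ, ψ] := by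
    ext i v
    fin_cases i <;> simp [e, Module.Dual.extendRCLikeₗ_symm_apply]
  rw [hfamily, e.toLinearMap.linearIndependent_iff e.ker]
  exact Complex.linearIndependent_real_triple_iff_complex_pair (by simp)
end
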